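/- Let X ⊆ ℝ^a and Y ⊆ ℝ^b be nonempty finite sets, let f : X → {−1, 1} and g : Y → {−1, 1}, and let d be a nonnegative integer. Suppose there exist real polynomials p₁, q₁ in a variables and p₂, q₂ in b variables, each of total degree at most d, with q₁ nonvanishing on X and q₂ nonvanishing on Y, such that sup_{x ∈ X} |f(x) − p₁(x)/q₁(x)| + sup_{y ∈ Y} |g(y) − p₂(y)/q₂(y)| < 1. Then there exists a real polynomial P in a + b variables of total degree at most 4d with P(x, y) ≠ 0 and sgn P(x, y) = (f ∧ g)(x, y) for all (x, y) ∈ X × Y; in particular degthr(f ∧ g) ≤ 4d. -/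

import Mathlib

/-!
Put `t₁ = 1 - p₁/q₁` and `t₂ = 1 - p₂/q₂`. Where `f = 1`, `t₁` lies within `e₁` of `0`, and
where `f = -1` it lies within `e₁` of `2` (likewise `t₂` with `g`, `e₂`). Since `e₁ + e₂ < 1`, the
product `t₁ t₂` exceeds `2` exactly when `f = g = -1`, so `2 - t₁ t₂` sign-represents `f ∧ g`.
Multiplying by `q₁² q₂² > 0` clears the denominators and leaves a polynomial of degree `≤ 4d`.
-/

open MvPolynomial

lemma Real.sign_mul_of_pos {c r : ℝ} (hc : 0 < c) : Real.sign (c * r) = Real.sign r := by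
  rcases lt_trichotomy r 0 with hr | rfl | hr
  · rw [Real.sign_of_neg hr, Real.sign_of_neg (mul_neg_of_pos_of_neg hc hr)]
  · rw [mul_zero]
  · rw [Real.sign_of_pos hr, Real.sign_of_pos (mul_pos hc hr)]

lemma two_sub_one_sub_mul_neg {r₁ r₂ e₁ e₂ : ℝ} (h₁ : |-1 - r₁| ≤ e₁) (h₂ : |-1 - r₂| ≤ e₂)
    (he : e₁ + e₂ < 1) : 2 - (1 - r₁) * (1 - r₂) < 0 := by
  rw [abs_le] at h₁ h₂
  nlinarith [h₁.1, h₁.2, h₂.1, h₂.2]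

lemma two_sub_one_sub_mul_pos {v r₁ r₂ e₁ e₂ : ℝ} (h₁ : |1 - r₁| ≤ e₁) (hv : |v| ≤ 1)
    (h₂ : |v - r₂| ≤ e₂) (he : e₁ + e₂ < 1) : 0 < 2 - (1 - r₁) * (1 - r₂) := by
  have he₂ : 0 ≤ e₂ := (abs_nonneg _).trans h₂
  have ht₂ : |1 - r₂| ≤ 2 + e₂ := calc
    |1 - r₂| ≤ |1 - v| + |v - r₂| := abs_sub_le 1 v r₂
    _ ≤ (1 + |v|) + e₂ := by gcongr; exact (abs_sub _ _).trans_eq (by rw [abs_one])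
    _ ≤ 2 + e₂ := by linarith
  have hprod : |1 - r₁| * |1 - r₂| < 2 := calc
    |1 - r₁| * |1 - r₂| ≤ e₁ * (2 + e₂) := by gcongr; exact (abs_nonneg _).trans h₁
    _ < 2 := by nlinarith [(abs_nonneg _).trans h₁]
  rw [← abs_mul] at hprod
  linarith [le_abs_self ((1 - r₁) * (1 - r₂))]

lemma sign_two_sub_one_sub_mul {u v r₁ r₂ e₁ e₂ : ℝ} (hu : u = -1 ∨ u = 1) (hv : v = -1 ∨ v = 1)
    (h₁ : |u - r₁| ≤ e₁) (h₂ : |v - r₂| ≤ e₂) (he : e₁ + e₂ < 1) :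
    2 - (1 - r₁) * (1 - r₂) ≠ 0 ∧
      Real.sign (2 - (1 - r₁) * (1 - r₂)) = if u = -1 ∧ v = -1 then -1 else 1 := by
  have hu' : |u| ≤ 1 := by rcases hu with rfl | rfl <;> norm_num
  have hv' : |v| ≤ 1 := by rcases hv with rfl | rfl <;> norm_num
  by_cases hneg : u = -1 ∧ v = -1
  · obtain ⟨rfl, rfl⟩ := hneg
    have := two_sub_one_sub_mul_neg h₁ h₂ he
    exact ⟨this.ne, by rw [Real.sign_of_neg this, if_pos ⟨rfl, rfl⟩]⟩
  · have hpos : 0 < 2 - (1 - r₁) * (1 - r₂) := by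
      rcases hu with rfl | rfl
      · obtain rfl : v = 1 := hv.resolve_left fun h => hneg ⟨rfl, h⟩
        rw [mul_comm]
        exact two_sub_one_sub_mul_pos h₂ hu' h₁ (by linarith)
      · exact two_sub_one_sub_mul_pos h₁ hv' h₂ he
    exact ⟨hpos.ne', by rw [Real.sign_of_pos hpos, if_neg hneg]⟩

section

variable {R σ τ : Type*}

lemma totalDegree_rename_inl_mul_rename_inr_le [CommRing R] (A : MvPolynomial σ R)
    (B : MvPolynomial τ R) :
    (rename Sum.inl A * rename Sum.inr B : MvPolynomial (σ ⊕ τ) R).totalDegree ≤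
      A.totalDegree + B.totalDegree :=
  (totalDegree_mul _ _).trans
    (add_le_add (totalDegree_rename_le _ _) (totalDegree_rename_le _ _))

noncomputable def andSignPoly [CommRing R] (p₁ q₁ : MvPolynomial σ R)
    (p₂ q₂ : MvPolynomial τ R) :
    MvPolynomial (σ ⊕ τ) R :=
  rename Sum.inl (C 2 * q₁ ^ 2) * rename Sum.inr (q₂ ^ 2) -
    rename Sum.inl ((q₁ - p₁) * q₁) * rename Sum.inr ((q₂ - p₂) * q₂)

lemma totalDegree_andSignPoly_le [CommRing R] {d : ℕ} {p₁ q₁ : MvPolynomial σ R}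
    {p₂ q₂ : MvPolynomial τ R} (hp₁ : p₁.totalDegree ≤ d) (hq₁ : q₁.totalDegree ≤ d)
    (hp₂ : p₂.totalDegree ≤ d) (hq₂ : q₂.totalDegree ≤ d) :
    (andSignPoly p₁ q₁ p₂ q₂).totalDegree ≤ 4 * d := by
  have := totalDegree_pow q₁ 2
  have := totalDegree_pow q₂ 2
  have := totalDegree_mul (C (2 : R)) (q₁ ^ 2)
  have := totalDegree_mul (q₁ - p₁) q₁
  have := totalDegree_mul (q₂ - p₂) q₂
  have := totalDegree_sub q₁ p₁
  have := totalDegree_sub q₂ p₂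
  have := totalDegree_rename_inl_mul_rename_inr_le (C 2 * q₁ ^ 2) (q₂ ^ 2)
  have := totalDegree_rename_inl_mul_rename_inr_le ((q₁ - p₁) * q₁) ((q₂ - p₂) * q₂)
  rw [totalDegree_C] at *
  exact (totalDegree_sub _ _).trans (max_le (by omega) (by omega))

lemma eval_andSignPoly [Field R] (x : σ → R) (y : τ → R) (p₁ q₁ : MvPolynomial σ R)
    (p₂ q₂ : MvPolynomial τ R) (hq₁ : eval x q₁ ≠ 0) (hq₂ : eval y q₂ ≠ 0) :
    eval (Sum.elim x y) (andSignPoly p₁ q₁ p₂ q₂) = eval x q₁ ^ 2 * eval y q₂ ^ 2 *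
      (2 - (1 - eval x p₁ / eval x q₁) * (1 - eval y p₂ / eval y q₂)) := by
  simp only [andSignPoly, map_sub, map_mul, map_pow, eval_rename, Sum.elim_comp_inl,
    Sum.elim_comp_inr, eval_C]
  field_simp

end

theorem stmt_5 (a b d : ℕ) (X : Finset (Fin a → ℝ)) (Y : Finset (Fin b → ℝ))
    (f : (Fin a → ℝ) → ℝ) (g : (Fin b → ℝ) → ℝ)
    (hf : ∀ x ∈ X, f x = -1 ∨ f x = 1) (hg : ∀ y ∈ Y, g y = -1 ∨ g y = 1)
    (p₁ q₁ : MvPolynomial (Fin a) ℝ) (p₂ q₂ : MvPolynomial (Fin b) ℝ)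
    (hp₁ : p₁.totalDegree ≤ d) (hq₁ : q₁.totalDegree ≤ d)
    (hp₂ : p₂.totalDegree ≤ d) (hq₂ : q₂.totalDegree ≤ d)
    (hq₁0 : ∀ x ∈ X, MvPolynomial.eval x q₁ ≠ 0)
    (hq₂0 : ∀ y ∈ Y, MvPolynomial.eval y q₂ ≠ 0)
    (e₁ e₂ : ℝ)
    (he₁ : ∀ x ∈ X, |f x - MvPolynomial.eval x p₁ / MvPolynomial.eval x q₁| ≤ e₁)
    (he₂ : ∀ y ∈ Y, |g y - MvPolynomial.eval y p₂ / MvPolynomial.eval y q₂| ≤ e₂)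
    (he : e₁ + e₂ < 1) :
    ∃ P : MvPolynomial (Fin a ⊕ Fin b) ℝ, P.totalDegree ≤ 4 * d ∧
      ∀ x ∈ X, ∀ y ∈ Y,
        MvPolynomial.eval (Sum.elim x y) P ≠ 0 ∧
        Real.sign (MvPolynomial.eval (Sum.elim x y) P) =
          (if f x = -1 ∧ g y = -1 then (-1 : ℝ) else 1) := by
  refine ⟨andSignPoly p₁ q₁ p₂ q₂, totalDegree_andSignPoly_le hp₁ hq₁ hp₂ hq₂, fun x hx y hy => ?_⟩
  have hc : 0 < eval x q₁ ^ 2 * eval y q₂ ^ 2 := by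
    have := hq₁0 x hx; have := hq₂0 y hy; positivity
  obtain ⟨hne, hsign⟩ := sign_two_sub_one_sub_mul (hf x hx) (hg y hy) (he₁ x hx) (he₂ y hy) he
  rw [eval_andSignPoly x y p₁ q₁ p₂ q₂ (hq₁0 x hx) (hq₂0 y hy), Real.sign_mul_of_pos hc]
  exact ⟨mul_ne_zero hc.ne' hne, hsign⟩
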